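/- arXiv:2304.00936 — 6 statements merged into one kernel-verified Lean document; each statement's English description precedes it below -/
import Mathlib

section
/- Let n ≥ 1 and let α₁, …, αₙ be linear functionals on (ZMod 2)^(n-1) such that every subfamily of n−1 of them is linearly independent. Then the group homomorphism φ : (ZMod 2)^(n-1) → (ZMod 2)^n defined by φ(t) = (α₁(t), …, αₙ(t)) is injective and its range is exactly the subgroup {g ∈ (ZMod 2)^n : g₁ + g₂ + ⋯ + gₙ = 0}. -/
/-- Let `n ≥ 1` and let `α₁, …, αₙ` be linear functionals on `(ZMod 2)^(n-1)` such that
every subfamily of `n-1` of them is linearly independent.  Then the homomorphism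
`φ : (ZMod 2)^(n-1) → (ZMod 2)^n`, `φ(t) = (α₁(t), …, αₙ(t))`, is injective and its range is
exactly the even subgroup `{g : ∑ i, g i = 0}`. -/
theorem weights_map_injective_range_even
    (n : ℕ) (hn : 1 ≤ n)
    (α : Fin n → Module.Dual (ZMod 2) (Fin (n - 1) → ZMod 2))
    (hgen : ∀ i : Fin n,
      LinearIndependent (ZMod 2) fun j : {j : Fin n // j ≠ i} => α j) :
    Function.Injective (fun t (i : Fin n) => α i t) ∧
      Set.range (fun t (i : Fin n) => α i t) =
        {g : Fin n → ZMod 2 | ∑ i, g i = 0} := by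
  classical
  set V := Fin (n - 1) → ZMod 2 with hV
  let φ : V →ₗ[ZMod 2] (Fin n → ZMod 2) := LinearMap.pi α
  have hVrank : Module.finrank (ZMod 2) V = n - 1 := by
    exact Module.finrank_fin_fun (R := ZMod 2)
  have hdual : Module.finrank (ZMod 2) (Module.Dual (ZMod 2) V) = n - 1 := by
    rw [Subspace.dual_finrank_eq, hVrank]
  have i0 : Fin n := ⟨0, hn⟩
  -- cardinality of subtype
  have hcard : ∀ i : Fin n, Fintype.card {j : Fin n // j ≠ i} = n - 1 := by
    intro i
    simp [Fintype.card_subtype_compl]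
  -- injectivity
  have hinj : Function.Injective φ := by
    rw [injective_iff_map_eq_zero]
    intro t ht
    have hall : ∀ i : Fin n, α i t = 0 := fun i => congrFun ht i
    have hspan := (hgen i0).span_eq_top_of_card_eq_finrank'
      (by rw [hcard, hdual])
    rw [← Module.forall_dual_apply_eq_zero_iff (ZMod 2)]
    intro β
    have hβ : β ∈ Submodule.span (ZMod 2)
        (Set.range fun j : {j : Fin n // j ≠ i0} => α j) := hspan ▸ Submodule.mem_top
    induction hβ using Submodule.span_induction with
    | mem x hx => obtain ⟨j, rfl⟩ := hx; exact hall j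
    | zero => simp
    | add x y _ _ hx hy => simp [hx, hy]
    | smul c x _ hx => simp [hx]
  -- sum relation
  have hnotli : ¬ LinearIndependent (ZMod 2) α := by
    intro h
    have := h.fintype_card_le_finrank
    rw [hdual, Fintype.card_fin] at this
    omega
  obtain ⟨c, hcsum, k, hk⟩ := Fintype.not_linearIndependent_iff.mp hnotli
  have hone : ∀ x : ZMod 2, x ≠ 0 → x = 1 := by decide
  have hcall : ∀ i, c i ≠ 0 := by
    intro i hci
    have hsplit : ∑ j : {j : Fin n // j ≠ i}, c j • α j = 0 := by
      have : ∑ j ∈ Finset.univ.erase i, c j • α j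
          = ∑ j : {j : Fin n // j ≠ i}, c (j : Fin n) • α (j : Fin n) := by
        apply Finset.sum_subtype
        intro x; simp
      rw [← this]
      rw [Finset.sum_erase_eq_sub (Finset.mem_univ i), hcsum, hci] at *
      simp
    have := Fintype.linearIndependent_iff.mp (hgen i) (fun j => c j) hsplit
    rcases eq_or_ne k i with rfl | hne
    · exact hk hci
    · exact hk (this ⟨k, hne⟩)
  have hsum0 : ∀ t : V, ∑ i, α i t = 0 := by
    intro t
    have : (∑ i, c i • α i) t = 0 := by rw [hcsum]; rfl
    simpa [hone _ (hcall _)] using this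
  -- the sum functional
  let L : (Fin n → ZMod 2) →ₗ[ZMod 2] ZMod 2 := ∑ i, LinearMap.proj i
  have hLapp : ∀ g : Fin n → ZMod 2, L g = ∑ i, g i := by
    intro g; simp [L]
  have hLsurj : Function.Surjective L := by
    intro x
    exact ⟨Pi.single i0 x, by rw [hLapp]; simp⟩
  have hle : LinearMap.range φ ≤ LinearMap.ker L := by
    rintro g ⟨t, rfl⟩
    rw [LinearMap.mem_ker, hLapp]
    exact hsum0 t
  have hker : Module.finrank (ZMod 2) (LinearMap.ker L) = n - 1 := by
    have hrn := LinearMap.finrank_range_add_finrank_ker L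
    have : Module.finrank (ZMod 2) (LinearMap.range L) = 1 := by
      rw [LinearMap.range_eq_top.mpr hLsurj]
      simp
    rw [this] at hrn
    simp at hrn
    omega
  have hrange : Module.finrank (ZMod 2) (LinearMap.range φ) = n - 1 := by
    rw [LinearMap.finrank_range_of_inj hinj, hVrank]
  have heq : LinearMap.range φ = LinearMap.ker L :=
    Submodule.eq_of_le_of_finrank_eq hle (by rw [hrange, hker])
  constructor
  · exact hinj
  · have : Set.range (fun t (i : Fin n) => α i t) = ↑(LinearMap.range φ) := by
      rw [LinearMap.coe_range]; rfl
    rw [this, heq]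
    ext g
    simp [LinearMap.mem_ker, hLapp]
end

section
/- Let n ≥ 1 and let G = {ε ∈ {±1}^n : ∏ᵢ εᵢ = 1} act on ℝ^n by coordinatewise multiplication, (ε · x)ᵢ = εᵢ xᵢ. Then the orbit space ℝ^n / G, with the quotient topology, is homeomorphic to ℝ^n. -/
/-!
The map `φ(x) = ((xᵢ² - x_ℓ²)_{i ≠ ℓ}, ∏ xᵢ)` is constant on orbits, and its fibres are exactly
the orbits: `x_ℓ²` is determined by `φ(x)` because `s ↦ ∏ᵢ (s + xᵢ² - x_ℓ²)` is strictly
increasing where its factors are nonnegative and takes the value `(∏ xᵢ)²` at `s = x_ℓ²`, and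
points with equal squares and equal products differ by an even sign change. The same
monotonicity gives surjectivity (intermediate value theorem) and properness of `φ`, so `φ` is a
closed, hence quotient, map and descends to a homeomorphism from the orbit space onto `ℝⁿ`.
-/

open Finset Topology

section ProdInequalities

variable {ι R : Type*} [Fintype ι] [Nonempty ι] [CommSemiring R] [LinearOrder R]
  [IsStrictOrderedRing R]

theorem le_prod_of_one_le_of_forall_le {c : R} {f : ι → R} (hc : 1 ≤ c) (hf : ∀ i, c ≤ f i) :
    c ≤ ∏ i, f i :=
  calc c ≤ c ^ Fintype.card ι := le_self_pow₀ hc Fintype.card_ne_zero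
    _ = ∏ _i : ι, c := (prod_const c).symm
    _ ≤ ∏ i, f i := prod_le_prod (fun _ _ => zero_le_one.trans hc) fun i _ => hf i

theorem prod_lt_prod_of_nonneg_of_forall_lt {f g : ι → R} (hf : ∀ i, 0 ≤ f i)
    (hfg : ∀ i, f i < g i) : ∏ i, f i < ∏ i, g i := by
  have hg : 0 < ∏ i, g i := prod_pos fun i _ => (hf i).trans_lt (hfg i)
  by_cases hf0 : ∃ i, f i = 0
  · obtain ⟨i, hi⟩ := hf0
    rwa [prod_eq_zero (mem_univ i) hi]
  · push Not at hf0
    exact prod_lt_prod_of_nonempty (fun i _ => (hf i).lt_of_ne' (hf0 i)) (fun i _ => hfg i)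
      univ_nonempty

theorem eq_zero_of_prod_add_eq_prod {f : ι → R} {c : R} (hf : ∀ i, 0 ≤ f i)
    (hfc : ∀ i, 0 ≤ f i + c) (h : ∏ i, (f i + c) = ∏ i, f i) : c = 0 := by
  rcases lt_trichotomy c 0 with hc | hc | hc
  · exact absurd h
      (prod_lt_prod_of_nonneg_of_forall_lt hfc fun i => add_lt_of_neg_right _ hc).ne
  · exact hc
  · exact absurd h (prod_lt_prod_of_nonneg_of_forall_lt hf fun i => lt_add_of_pos_right _ hc).ne'

end ProdInequalities

theorem exists_prod_add_eq {ι : Type*} [Fintype ι] [Nonempty ι] (c : ι → ℝ) {v : ℝ}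
    (hv : 0 ≤ v) : ∃ t, (∀ i, 0 ≤ t + c i) ∧ ∏ i, (t + c i) = v := by
  obtain ⟨j, -, hj⟩ := exists_max_image univ (fun i => -c i) univ_nonempty
  have hstart : ∀ i, 0 ≤ -c j + c i := fun i => by linarith [hj i (mem_univ i)]
  have hend : v ≤ ∏ i, (-c j + (v + 1) + c i) :=
    (le_add_of_nonneg_right zero_le_one).trans <|
      le_prod_of_one_le_of_forall_le (by linarith) fun i => by linarith [hstart i]
  have hv_mem : v ∈ Set.Icc (∏ i, (-c j + c i)) (∏ i, (-c j + (v + 1) + c i)) :=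
    ⟨by rw [prod_eq_zero (mem_univ j) (neg_add_cancel _)]; exact hv, hend⟩
  obtain ⟨t, ht, htv⟩ := intermediate_value_Icc (by linarith : -c j ≤ -c j + (v + 1))
    (by fun_prop : Continuous fun t => ∏ i, (t + c i)).continuousOn hv_mem
  exact ⟨t, fun i => by linarith [hstart i, ht.1], htv⟩

section EvenSign

variable {ι : Type*} [Fintype ι]

def EvenSignRel (x y : ι → ℝ) : Prop :=
  ∃ ε : ι → ℝ, (∀ i, ε i = 1 ∨ ε i = -1) ∧ (∏ i, ε i) = 1 ∧ ∀ i, y i = ε i * x i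

theorem prod_eq_one_or_neg_one {R : Type*} [CommRing R] {ε : ι → R}
    (hε : ∀ i, ε i = 1 ∨ ε i = -1) :
    ∏ i, ε i = 1 ∨ ∏ i, ε i = -1 :=
  prod_induction ε (fun a => a = 1 ∨ a = -1)
    (by rintro a b (rfl | rfl) (rfl | rfl) <;> norm_num) (Or.inl rfl) fun i _ => hε i

/-- Equal squares give a full sign change `δ` with `y = δ x`; if `∏ δ = -1`, then `∏ x = -∏ x`
vanishes, and flipping `δ` at a zero coordinate of `x` corrects the parity. -/
theorem evenSignRel_iff {x y : ι → ℝ} :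
    EvenSignRel x y ↔ (∀ i, x i ^ 2 = y i ^ 2) ∧ ∏ i, x i = ∏ i, y i := by
  classical
  constructor
  · rintro ⟨ε, hε, hprod, hy⟩
    obtain rfl : y = fun i => ε i * x i := funext hy
    refine ⟨fun i => ?_, by rw [prod_mul_distrib, hprod, one_mul]⟩
    rcases hε i with h | h <;> simp [h]
  rintro ⟨hsq, hprod⟩
  set δ : ι → ℝ := fun i => if y i = x i then 1 else -1
  have hδ : ∀ i, δ i = 1 ∨ δ i = -1 := fun i => by by_cases h : y i = x i <;> simp [δ, h]
  have hy : ∀ i, y i = δ i * x i := fun i => by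
    by_cases h : y i = x i
    · simp [δ, h]
    · simpa [δ, h] using (sq_eq_sq_iff_eq_or_eq_neg.1 (hsq i).symm).resolve_left h
  rcases prod_eq_one_or_neg_one hδ with hδ1 | hδ1
  · exact ⟨δ, hδ, hδ1, hy⟩
  have hx0 : ∏ i, x i = 0 := by
    have : ∏ i, y i = -∏ i, x i := by
      rw [prod_congr rfl fun i _ => hy i, prod_mul_distrib, hδ1, neg_one_mul]
    linarith
  obtain ⟨j, -, hj⟩ := prod_eq_zero_iff.1 hx0
  refine ⟨fun i => δ i * (Pi.mulSingle j (-1) : ι → ℝ) i, fun i => ?_, ?_, fun i => ?_⟩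
  · by_cases h : i = j
    · subst h; rcases hδ i with h | h <;> simp [h]
    · simpa [h] using hδ i
  · rw [prod_mul_distrib, prod_pi_mulSingle', if_pos (mem_univ j), hδ1]; norm_num
  · by_cases h : i = j
    · subst h
      have : y i = 0 := by simpa [hj] using (hsq i).symm
      simp [this, hj]
    · simpa [h] using hy i

variable [DecidableEq ι]

noncomputable def evenSignInvariants (ℓ : ι) (x : ι → ℝ) : ι → ℝ :=
  fun i => if i = ℓ then ∏ j, x j else x i ^ 2 - x ℓ ^ 2

variable (ℓ : ι)

@[simp]
theorem evenSignInvariants_apply_self (x : ι → ℝ) : evenSignInvariants ℓ x ℓ = ∏ j, x j :=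
  if_pos rfl

theorem evenSignInvariants_apply_of_ne {x : ι → ℝ} {i : ι} (hi : i ≠ ℓ) :
    evenSignInvariants ℓ x i = x i ^ 2 - x ℓ ^ 2 :=
  if_neg hi

theorem continuous_evenSignInvariants : Continuous (evenSignInvariants ℓ) :=
  continuous_pi fun i => by unfold evenSignInvariants; split <;> fun_prop

theorem evenSignInvariants_eq_iff {x y : ι → ℝ} :
    evenSignInvariants ℓ x = evenSignInvariants ℓ y ↔
      (∀ i, x i ^ 2 = y i ^ 2) ∧ ∏ i, x i = ∏ i, y i := by
  have : Nonempty ι := ⟨ℓ⟩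
  constructor
  · intro h
    have hprod : ∏ i, x i = ∏ i, y i := by simpa using congrFun h ℓ
    set c := y ℓ ^ 2 - x ℓ ^ 2
    have hshift : ∀ i, y i ^ 2 = x i ^ 2 + c := fun i => by
      by_cases hi : i = ℓ
      · subst hi; ring
      · have := congrFun h i
        rw [evenSignInvariants_apply_of_ne ℓ hi, evenSignInvariants_apply_of_ne ℓ hi] at this
        linarith
    have hc : c = 0 := by
      refine eq_zero_of_prod_add_eq_prod (fun i => sq_nonneg (x i))
        (fun i => hshift i ▸ sq_nonneg (y i)) ?_
      simp only [← hshift, prod_pow, hprod]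
    exact ⟨fun i => by rw [hshift, hc, add_zero], hprod⟩
  · rintro ⟨hsq, hprod⟩
    funext i
    by_cases hi : i = ℓ
    · subst hi; simp [hprod]
    · simp only [evenSignInvariants_apply_of_ne ℓ hi, hsq]

theorem evenSignRel_iff_evenSignInvariants_eq {x y : ι → ℝ} :
    EvenSignRel x y ↔ evenSignInvariants ℓ x = evenSignInvariants ℓ y :=
  evenSignRel_iff.trans (evenSignInvariants_eq_iff ℓ).symm

theorem evenSignInvariants_surjective : Function.Surjective (evenSignInvariants ℓ) := by
  have : Nonempty ι := ⟨ℓ⟩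
  intro z
  set q := z ℓ
  obtain ⟨t, ht, htq⟩ := exists_prod_add_eq (Function.update z ℓ 0) (sq_nonneg q)
  set y : ι → ℝ := fun i => √(t + Function.update z ℓ 0 i)
  have hy_sq : ∀ i, y i ^ 2 = t + Function.update z ℓ 0 i := fun i => Real.sq_sqrt (ht i)
  have hy_prod : ∏ i, y i = |q| := by
    rw [← Real.sqrt_prod _ fun i _ => ht i, htq, Real.sqrt_sq_eq_abs]
  set s : ℝ := if 0 ≤ q then 1 else -1
  have hs : s ^ 2 = 1 := by by_cases hq : 0 ≤ q <;> simp [s, hq]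
  have hsq : s * |q| = q := by
    by_cases hq : 0 ≤ q
    · simp [s, hq, abs_of_nonneg hq]
    · simp [s, hq, abs_of_neg (not_le.1 hq)]
  refine ⟨fun i => y i * (Pi.mulSingle ℓ s : ι → ℝ) i, funext fun i => ?_⟩
  by_cases hi : i = ℓ
  · subst hi
    rw [evenSignInvariants_apply_self, prod_mul_distrib, prod_pi_mulSingle', if_pos (mem_univ _),
      hy_prod, mul_comm, hsq]
  · rw [evenSignInvariants_apply_of_ne ℓ hi]
    simp only [mul_pow, Pi.mulSingle_eq_same, Pi.mulSingle_eq_of_ne hi, hs, mul_one,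
      hy_sq, Function.update_self, Function.update_of_ne hi]
    ring

theorem norm_le_norm_evenSignInvariants_add_one (x : ι → ℝ) :
    ‖x‖ ≤ ‖evenSignInvariants ℓ x‖ + 1 := by
  have : Nonempty ι := ⟨ℓ⟩
  set C := ‖evenSignInvariants ℓ x‖
  have hC : 0 ≤ C := norm_nonneg _
  have hdiff : ∀ i, |x i ^ 2 - x ℓ ^ 2| ≤ C := fun i => by
    by_cases hi : i = ℓ
    · simpa [hi] using hC
    · simpa [evenSignInvariants_apply_of_ne ℓ hi] using
        norm_le_pi_norm (evenSignInvariants ℓ x) i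
  have hprod : |∏ i, x i| ≤ C := by
    simpa only [evenSignInvariants_apply_self, Real.norm_eq_abs] using
      norm_le_pi_norm (evenSignInvariants ℓ x) ℓ
  -- otherwise every `xᵢ²` would be at least `C² + 1`, and so would `(∏ xᵢ)² ≤ C²`
  have hℓ : x ℓ ^ 2 < C ^ 2 + C + 1 := by
    by_contra! h
    have hlow : C ^ 2 + 1 ≤ ∏ i, x i ^ 2 :=
      le_prod_of_one_le_of_forall_le (by nlinarith) fun i => by
        linarith [(abs_le.1 (hdiff i)).1]
    rw [prod_pow] at hlow
    nlinarith [sq_le_sq' (abs_le.1 hprod).1 (abs_le.1 hprod).2]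
  refine (pi_norm_le_iff_of_nonneg (by linarith)).2 fun i => (abs_lt_of_sq_lt_sq ?_ ?_).le
  · nlinarith [(abs_le.1 (hdiff i)).2]
  · linarith

theorem isProperMap_evenSignInvariants : IsProperMap (evenSignInvariants ℓ) := by
  refine isProperMap_iff_isCompact_preimage.2 ⟨continuous_evenSignInvariants ℓ, fun K hK => ?_⟩
  obtain ⟨C, hC⟩ := isBounded_iff_forall_norm_le.1 hK.isBounded
  refine Metric.isCompact_of_isClosed_isBounded
    (hK.isClosed.preimage (continuous_evenSignInvariants ℓ))
    (isBounded_iff_forall_norm_le.2 ⟨C + 1, fun x hx => ?_⟩)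
  linarith [norm_le_norm_evenSignInvariants_add_one ℓ x, hC _ hx]

end EvenSign

noncomputable def Topology.IsQuotientMap.quotHomeomorph {X Y : Type*} [TopologicalSpace X]
    [TopologicalSpace Y] {f : X → Y} (hf : IsQuotientMap f) {r : X → X → Prop}
    (hr : ∀ x y, r x y ↔ f x = f y) : Quot r ≃ₜ Y := by
  obtain rfl : r = (Setoid.ker f).r := funext₂ fun x y => propext (hr x y)
  exact IsQuotientMap.homeomorph (f := ⟨f, hf.continuous⟩) hf

noncomputable def evenSignOrbitSpaceHomeomorph {ι : Type*} [Fintype ι] [DecidableEq ι] (ℓ : ι) :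
    Quot (EvenSignRel (ι := ι)) ≃ₜ (ι → ℝ) :=
  ((isProperMap_evenSignInvariants ℓ).isClosedMap.isQuotientMap
    (continuous_evenSignInvariants ℓ) (evenSignInvariants_surjective ℓ)).quotHomeomorph
    fun _ _ => evenSignRel_iff_evenSignInvariants_eq ℓ

/-- The orbit space of the standard complexity one action of
`G = {ε ∈ {±1}^n : ∏ εᵢ = 1}` on `ℝ^n` (by coordinatewise multiplication),
with the quotient topology, is homeomorphic to `ℝ^n`. -/
theorem orbit_space_standard_complexity_one_homeo_euclidean
    (n : ℕ) (hn : 1 ≤ n) :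
    Nonempty ((Quot fun x y : Fin n → ℝ =>
        ∃ ε : Fin n → ℝ, (∀ i, ε i = 1 ∨ ε i = -1) ∧ (∏ i, ε i) = 1 ∧
          ∀ i, y i = ε i * x i) ≃ₜ (Fin n → ℝ)) :=
  ⟨evenSignOrbitSpaceHomeomorph ⟨0, hn⟩⟩
end

section
/- Let n ≥ 1, let G = {ε ∈ {±1}^n : ∏ᵢ εᵢ = 1} act on ℝ^n by coordinatewise multiplication, and let x ∈ ℝ^n be any point with stabilizer subgroup H = Stab_G(x) = {ε ∈ G : ε · x = x}. Then the orbit space ℝ^n / H, with the quotient topology, is homeomorphic to ℝ^n. -/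
open Finset

namespace OrbitAuxCplx1

variable (n : ℕ) (hn : 1 ≤ n) (x : Fin n → ℝ)

noncomputable local instance : DecidableEq ℝ := Classical.decEq ℝ

noncomputable def Z : Finset (Fin n) := Finset.univ.filter (fun i => x i = 0)

lemma mem_Z {i : Fin n} : i ∈ Z n x ↔ x i = 0 := by simp [Z]

noncomputable def i0 : Fin n :=
  if h : (Z n x).Nonempty then (Z n x).min' h else ⟨0, hn⟩

lemma i0_mem (h : (Z n x).Nonempty) : i0 n hn x ∈ Z n x := by
  rw [i0, dif_pos h]; exact (Z n x).min'_mem h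

noncomputable def Phi (y : Fin n → ℝ) : Fin n → ℝ := fun i =>
  if x i = 0 then
    (if i = i0 n hn x then ∏ j ∈ Z n x, y j else |y i| - |y (i0 n hn x)|)
  else y i

lemma Phi_cont : Continuous (Phi n hn x) := by
  apply continuous_pi
  intro i
  unfold Phi
  split_ifs
  · exact continuous_finset_prod _ (fun j _ => continuous_apply j)
  · exact ((continuous_apply i).abs.sub (continuous_apply _).abs)
  · exact continuous_apply i

/-- a product over a nonempty finset of factors each `≥ B ≥ 1` is `≥ B`. -/
lemma prod_ge {s : Finset (Fin n)} (hs : s.Nonempty) {f : Fin n → ℝ} {B : ℝ}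
    (hB : 1 ≤ B) (hf : ∀ i ∈ s, B ≤ f i) : B ≤ ∏ i ∈ s, f i := by
  obtain ⟨j, hj⟩ := hs
  rw [← Finset.mul_prod_erase s f hj]
  have h1 : (1:ℝ) ≤ ∏ i ∈ s.erase j, f i := by
    have := Finset.prod_le_prod (s := s.erase j) (f := fun _ => (1:ℝ)) (g := f)
      (fun i _ => zero_le_one) (fun i hi => hB.trans (hf i (Finset.erase_subset _ _ hi)))
    simpa using this
  nlinarith [hf j hj]


def R (y z : Fin n → ℝ) : Prop :=
  ∃ ε : Fin n → ℝ, (∀ i, ε i = 1 ∨ ε i = -1) ∧ (∏ i, ε i) = 1 ∧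
    (∀ i, ε i * x i = x i) ∧ ∀ i, z i = ε i * y i

lemma Phi_invariant {y z : Fin n → ℝ} (h : R n x y z) : Phi n hn x y = Phi n hn x z := by
  obtain ⟨ε, hpm, hprod, hfix, hz⟩ := h
  have hone : ∀ i, x i ≠ 0 → ε i = 1 := by
    intro i hxi
    have := hfix i
    have h1 : ε i * x i = 1 * x i := by rw [this, one_mul]
    exact mul_right_cancel₀ hxi h1
  have habs : ∀ i, |z i| = |y i| := by
    intro i
    rw [hz i, abs_mul]
    rcases hpm i with h | h <;> rw [h] <;> simp
  have hprodZ : ∏ j ∈ Z n x, z j = ∏ j ∈ Z n x, y j := by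
    have h1 : ∏ j ∈ Z n x, z j = (∏ j ∈ Z n x, ε j) * ∏ j ∈ Z n x, y j := by
      rw [← Finset.prod_mul_distrib]
      exact Finset.prod_congr rfl (fun j _ => hz j)
    have h2 : ∏ j ∈ Z n x, ε j = ∏ j, ε j :=
      Finset.prod_subset (Finset.subset_univ _)
        (fun i _ hi => hone i (by simpa [mem_Z] using hi))
    rw [h1, h2, hprod, one_mul]
  funext i
  unfold Phi
  by_cases hxi : x i = 0
  · rw [if_pos hxi, if_pos hxi]
    by_cases hi0 : i = i0 n hn x
    · rw [if_pos hi0, if_pos hi0, hprodZ]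
    · rw [if_neg hi0, if_neg hi0, habs i, habs (i0 n hn x)]
  · rw [if_neg hxi, if_neg hxi, hz i, hone i hxi, one_mul]


lemma absEq_aux {y z : Fin n → ℝ} (hne : (Z n x).Nonempty)
    (hdiff : ∀ i ∈ Z n x, i ≠ i0 n hn x → |z i| - |z (i0 n hn x)| = |y i| - |y (i0 n hn x)|)
    (hprodabs : ∏ i ∈ Z n x, |z i| = ∏ i ∈ Z n x, |y i|)
    (hlt : |y (i0 n hn x)| < |z (i0 n hn x)|) : False := by
  have hstr : ∀ i ∈ Z n x, |y i| < |z i| := by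
    intro i hi
    by_cases h : i = i0 n hn x
    · rw [h]; exact hlt
    · have := hdiff i hi h; linarith
  have hlt' : ∏ i ∈ Z n x, |y i| < ∏ i ∈ Z n x, |z i| := by
    by_cases hy : ∀ i ∈ Z n x, 0 < |y i|
    · exact Finset.prod_lt_prod_of_nonempty hy hstr hne
    · push_neg at hy
      obtain ⟨j, hj, hj0⟩ := hy
      have hj0' : |y j| = 0 := le_antisymm hj0 (abs_nonneg _)
      have h0 : ∏ i ∈ Z n x, |y i| = 0 := Finset.prod_eq_zero hj hj0'
      have hpos : 0 < ∏ i ∈ Z n x, |z i| :=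
        Finset.prod_pos (fun i hi => lt_of_le_of_lt (abs_nonneg _) (hstr i hi))
      rw [h0]; exact hpos
  linarith

lemma absEq {y z : Fin n → ℝ}
    (hdiff : ∀ i ∈ Z n x, i ≠ i0 n hn x → |z i| - |z (i0 n hn x)| = |y i| - |y (i0 n hn x)|)
    (hprod : ∏ i ∈ Z n x, z i = ∏ i ∈ Z n x, y i) :
    ∀ i ∈ Z n x, |z i| = |y i| := by
  rcases Finset.eq_empty_or_nonempty (Z n x) with he | hne
  · intro i hi; rw [he] at hi; exact absurd hi (Finset.notMem_empty i)
  · have hprodabs : ∏ i ∈ Z n x, |z i| = ∏ i ∈ Z n x, |y i| := by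
      rw [← Finset.abs_prod, ← Finset.abs_prod, hprod]
    have h0 : |z (i0 n hn x)| = |y (i0 n hn x)| := by
      rcases lt_trichotomy (|y (i0 n hn x)|) (|z (i0 n hn x)|) with h | h | h
      · exact absurd (absEq_aux n hn x hne hdiff hprodabs h) id
      · exact h.symm
      · exact absurd (absEq_aux n hn x hne
          (fun i hi hne' => by linarith [hdiff i hi hne']) hprodabs.symm h) id
    intro i hi
    by_cases h : i = i0 n hn x
    · rw [h]; exact h0
    · have := hdiff i hi h; linarith


lemma Phi_fibers {y z : Fin n → ℝ} (h : Phi n hn x y = Phi n hn x z) : R n x y z := by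
  have hPhi : ∀ i, Phi n hn x y i = Phi n hn x z i := fun i => congrFun h i
  have hoff : ∀ i, x i ≠ 0 → z i = y i := by
    intro i hxi
    have := hPhi i
    unfold Phi at this
    rw [if_neg hxi, if_neg hxi] at this
    exact this.symm
  have hprod : ∏ j ∈ Z n x, z j = ∏ j ∈ Z n x, y j := by
    rcases Finset.eq_empty_or_nonempty (Z n x) with he | hne
    · simp [he]
    · have hx0 : x (i0 n hn x) = 0 := (mem_Z n x).1 (i0_mem n hn x hne)
      have := hPhi (i0 n hn x)
      unfold Phi at this
      rw [if_pos hx0, if_pos hx0, if_pos rfl, if_pos rfl] at this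
      exact this.symm
  have hdiff : ∀ i ∈ Z n x, i ≠ i0 n hn x →
      |z i| - |z (i0 n hn x)| = |y i| - |y (i0 n hn x)| := by
    intro i hi hne
    have hx0 : x i = 0 := (mem_Z n x).1 hi
    have := hPhi i
    unfold Phi at this
    rw [if_pos hx0, if_pos hx0, if_neg hne, if_neg hne] at this
    exact this.symm
  have habs : ∀ i ∈ Z n x, |z i| = |y i| := absEq n hn x hdiff hprod
  -- construct ε
  by_cases hy : ∀ i ∈ Z n x, y i ≠ 0
  · -- case A: no zero among the y-coordinates in Z
    refine ⟨fun i => if x i = 0 then z i / y i else 1, ?_, ?_, ?_, ?_⟩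
    · intro i
      dsimp only
      by_cases hxi : x i = 0
      · have hyi : y i ≠ 0 := hy i ((mem_Z n x).2 hxi)
        have : |z i / y i| = 1 := by
          rw [abs_div, habs i ((mem_Z n x).2 hxi), div_self (abs_ne_zero.2 hyi)]
        rw [if_pos hxi]
        rcases abs_eq (le_of_lt one_pos) |>.1 this with h' | h'
        · exact Or.inl h'
        · exact Or.inr h'
      · rw [if_neg hxi]; exact Or.inl rfl
    · have h1 : ∏ i, (if x i = 0 then z i / y i else 1) =
          ∏ i ∈ Z n x, (if x i = 0 then z i / y i else 1) :=
        (Finset.prod_subset (Finset.subset_univ _)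
          (fun i _ hi => if_neg (by simpa [mem_Z] using hi))).symm
      rw [h1]
      have h2 : ∏ i ∈ Z n x, (if x i = 0 then z i / y i else 1) =
          ∏ i ∈ Z n x, z i / y i :=
        Finset.prod_congr rfl (fun i hi => if_pos ((mem_Z n x).1 hi))
      rw [h2, Finset.prod_div_distrib, hprod,
        div_self (Finset.prod_ne_zero_iff.2 hy)]
    · intro i
      dsimp only
      by_cases hxi : x i = 0
      · rw [hxi, mul_zero]
      · rw [if_neg hxi, one_mul]
    · intro i
      dsimp only
      by_cases hxi : x i = 0
      · rw [if_pos hxi, div_mul_cancel₀ _ (hy i ((mem_Z n x).2 hxi))]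
      · rw [if_neg hxi, one_mul]; exact hoff i hxi
  · -- case B: some y-coordinate in Z vanishes
    push_neg at hy
    obtain ⟨j, hj, hyj⟩ := hy
    have hzj : z j = 0 := by
      have := habs j hj
      rw [hyj, abs_zero, abs_eq_zero] at this
      exact this
    set ε0 : Fin n → ℝ := fun i => if x i = 0 ∧ y i ≠ 0 then z i / y i else 1 with hε0
    have hε0pm : ∀ i, ε0 i = 1 ∨ ε0 i = -1 := by
      intro i
      rw [hε0]
      by_cases hc : x i = 0 ∧ y i ≠ 0
      · have : |z i / y i| = 1 := by
          rw [abs_div, habs i ((mem_Z n x).2 hc.1), div_self (abs_ne_zero.2 hc.2)]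
        simp only [if_pos hc]
        exact (abs_eq (le_of_lt one_pos)).1 this
      · simp only [if_neg hc]; trivial
    set δ : ℝ := ∏ k ∈ Finset.univ.erase j, ε0 k with hδ
    have hδpm : δ = 1 ∨ δ = -1 := by
      rw [hδ]
      refine Finset.prod_induction ε0 (fun t => t = 1 ∨ t = -1)
        ?_ (by norm_num) (fun i _ => hε0pm i)
      rintro a b (ha | ha) (hb | hb) <;> rw [ha, hb] <;> norm_num
    refine ⟨fun i => if i = j then δ else ε0 i, ?_, ?_, ?_, ?_⟩
    · intro i
      dsimp only
      by_cases hij : i = j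
      · rw [if_pos hij]; exact hδpm
      · rw [if_neg hij]; exact hε0pm i
    · rw [← Finset.mul_prod_erase Finset.univ _ (Finset.mem_univ j), if_pos rfl]
      have : ∏ i ∈ Finset.univ.erase j, (if i = j then δ else ε0 i) =
          ∏ i ∈ Finset.univ.erase j, ε0 i :=
        Finset.prod_congr rfl (fun i hi => if_neg (Finset.ne_of_mem_erase hi))
      rw [this, ← hδ]
      rcases hδpm with h' | h' <;> rw [h'] <;> norm_num
    · intro i
      dsimp only
      by_cases hxi : x i = 0
      · rw [hxi, mul_zero]
      · have hij : i ≠ j := fun h' => hxi (h' ▸ (mem_Z n x).1 hj)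
        rw [if_neg hij, hε0]
        simp only [if_neg (fun hc : x i = 0 ∧ y i ≠ 0 => hxi hc.1), one_mul]
    · intro i
      dsimp only
      by_cases hij : i = j
      · rw [if_pos hij, hij, hyj, mul_zero, hzj]
      · rw [if_neg hij, hε0]
        by_cases hc : x i = 0 ∧ y i ≠ 0
        · simp only [if_pos hc]
          rw [div_mul_cancel₀ _ hc.2]
        · simp only [if_neg hc, one_mul]
          by_cases hxi : x i = 0
          · have hyi : y i = 0 := by
              by_contra h'
              exact hc ⟨hxi, h'⟩
            have := habs i ((mem_Z n x).2 hxi)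
            rw [hyi, abs_zero, abs_eq_zero] at this
            rw [this, hyi]
          · exact hoff i hxi


lemma Phi_surj : Function.Surjective (Phi n hn x) := by
  intro w
  rcases Finset.eq_empty_or_nonempty (Z n x) with he | hne
  · refine ⟨w, ?_⟩
    funext i
    have hxi : x i ≠ 0 := by
      intro h'
      have : i ∈ Z n x := (mem_Z n x).2 h'
      rw [he] at this
      exact absurd this (Finset.notMem_empty i)
    unfold Phi
    rw [if_neg hxi]
  · set I := i0 n hn x with hI
    have hImem : I ∈ Z n x := i0_mem n hn x hne
    set s : Fin n → ℝ := fun i => if i = I then 0 else w i with hs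
    set p : ℝ := w I with hp
    have hsI : s I = 0 := by rw [hs]; simp
    set c0 : ℝ := (Z n x).sup' hne (fun i => -s i) with hc0
    have hc0_ge : ∀ i ∈ Z n x, -s i ≤ c0 := fun i hi => Finset.le_sup' (f := fun i => -s i) hi
    have hc0_nonneg : 0 ≤ c0 := by
      have h1 := hc0_ge I hImem
      rw [hsI] at h1
      linarith
    obtain ⟨istar, histar, hstar⟩ := Finset.exists_mem_eq_sup' hne (fun i => -s i)
    set g : ℝ → ℝ := fun c => ∏ i ∈ Z n x, (c + s i) with hg
    have hgcont : Continuous g :=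
      continuous_finset_prod _ (fun i _ => continuous_id.add continuous_const)
    have hgc0 : g c0 = 0 := by
      refine Finset.prod_eq_zero histar ?_
      have : c0 = -s istar := hstar
      linarith
    set B : ℝ := max 1 |p| with hB
    have hB1 : (1:ℝ) ≤ B := le_max_left _ _
    set M : ℝ := c0 + B with hM
    have hc0M : c0 ≤ M := by rw [hM]; linarith
    have hgM : |p| ≤ g M := by
      have h1 : B ≤ g M := by
        refine prod_ge n hne hB1 (fun i hi => ?_)
        have := hc0_ge i hi
        rw [hM]
        linarith
      exact le_trans (le_max_right 1 |p|) h1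
    have hmem : |p| ∈ Set.Icc (g c0) (g M) := by
      rw [hgc0]
      exact ⟨abs_nonneg p, hgM⟩
    obtain ⟨c, hcmem, hgc⟩ := intermediate_value_Icc hc0M hgcont.continuousOn hmem
    have hcc0 : c0 ≤ c := hcmem.1
    have hcpos : 0 ≤ c := le_trans hc0_nonneg hcc0
    have hcs : ∀ i ∈ Z n x, 0 ≤ c + s i := by
      intro i hi
      have := hc0_ge i hi
      linarith
    refine ⟨fun i => if x i = 0 then (if i = I then (if 0 ≤ p then c else -c)
      else c + s i) else w i, ?_⟩
    set y : Fin n → ℝ := fun i => if x i = 0 then (if i = I then (if 0 ≤ p then c else -c)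
      else c + s i) else w i with hy
    have hyI : y I = if 0 ≤ p then c else -c := by
      rw [hy]
      simp [(mem_Z n x).1 hImem]
    have hyabsI : |y I| = c := by
      rw [hyI]
      by_cases hp0 : 0 ≤ p
      · rw [if_pos hp0, abs_of_nonneg hcpos]
      · rw [if_neg hp0, abs_neg, abs_of_nonneg hcpos]
    have hyZ : ∀ j ∈ Z n x, j ≠ I → y j = c + s j := by
      intro j hj hjI
      rw [hy]
      simp only [if_pos ((mem_Z n x).1 hj), if_neg hjI]
    funext i
    unfold Phi
    by_cases hxi : x i = 0
    · rw [if_pos hxi]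
      by_cases hiI : i = I
      · rw [if_pos hiI, hiI, ← hp]
        -- goal : ∏ j ∈ Z n x, y j = p
        have h1 : ∏ j ∈ Z n x, y j = y I * ∏ j ∈ (Z n x).erase I, y j :=
          (Finset.mul_prod_erase _ _ hImem).symm
        have h2 : ∏ j ∈ (Z n x).erase I, y j = ∏ j ∈ (Z n x).erase I, (c + s j) :=
          Finset.prod_congr rfl (fun j hj =>
            hyZ j (Finset.mem_of_mem_erase hj) (Finset.ne_of_mem_erase hj))
        have h3 : g c = c * ∏ j ∈ (Z n x).erase I, (c + s j) := by
          rw [hg]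
          dsimp only
          rw [← Finset.mul_prod_erase _ _ hImem, hsI, add_zero]
        rw [h1, h2, hyI]
        by_cases hp0 : 0 ≤ p
        · rw [if_pos hp0, ← h3, hgc, abs_of_nonneg hp0]
        · rw [if_neg hp0]
          push_neg at hp0
          have : c * ∏ j ∈ (Z n x).erase I, (c + s j) = |p| := by rw [← h3, hgc]
          rw [abs_of_neg hp0] at this
          linarith [this]
      · rw [if_neg hiI]
        have hiZ : i ∈ Z n x := (mem_Z n x).2 hxi
        rw [hyZ i hiZ hiI, hyabsI, abs_of_nonneg (hcs i hiZ)]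
        rw [hs]
        simp only [if_neg hiI]
        ring
    · rw [if_neg hxi, hy]
      simp only [if_neg hxi]


lemma Phi_bound {C : ℝ} (hC : 0 ≤ C) {y : Fin n → ℝ}
    (h : ∀ i, |Phi n hn x y i| ≤ C) : ∀ i, |y i| ≤ 3 * C + 1 := by
  intro i
  by_cases hxi : x i = 0
  · have hiZ : i ∈ Z n x := (mem_Z n x).2 hxi
    have hne : (Z n x).Nonempty := ⟨i, hiZ⟩
    set I := i0 n hn x with hI
    have hImem : I ∈ Z n x := i0_mem n hn x hne
    have hxI : x I = 0 := (mem_Z n x).1 hImem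
    set c : ℝ := |y I| with hc
    have hPhiI : Phi n hn x y I = ∏ j ∈ Z n x, y j := by
      unfold Phi
      rw [if_pos hxI, if_pos rfl]
    have hprodC : |∏ j ∈ Z n x, y j| ≤ C := by rw [← hPhiI]; exact h I
    have hdiffs : ∀ j ∈ Z n x, j ≠ I → Phi n hn x y j = |y j| - c := by
      intro j hj hjI
      unfold Phi
      rw [if_pos ((mem_Z n x).1 hj), if_neg hjI]
    have hcle : c ≤ 2 * C + 1 := by
      by_contra hc'
      push_neg at hc'
      have hfac : ∀ j ∈ Z n x, C + 1 ≤ |y j| := by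
        intro j hj
        by_cases hjI : j = I
        · rw [hjI, ← hc]; linarith
        · have h1 := hdiffs j hj hjI
          have h2 : |Phi n hn x y j| ≤ C := h j
          have h3 : -C ≤ Phi n hn x y j := by
            rcases abs_le.1 h2 with ⟨h3, _⟩
            exact h3
          linarith
      have h4 : C + 1 ≤ ∏ j ∈ Z n x, |y j| :=
        prod_ge n hne (by linarith) hfac
      rw [← Finset.abs_prod] at h4
      linarith
    by_cases hiI : i = I
    · rw [hiI, ← hc]; linarith
    · have h1 := hdiffs i hiZ hiI
      have h2 : |Phi n hn x y i| ≤ C := h i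
      have h3 : Phi n hn x y i ≤ C := (abs_le.1 h2).2
      linarith
  · have h1 : Phi n hn x y i = y i := by
      unfold Phi
      rw [if_neg hxi]
    have := h i
    rw [h1] at this
    linarith

end OrbitAuxCplx1


/-- Let `G = {ε ∈ {±1}^n : ∏ εᵢ = 1}` act on `ℝ^n` by coordinatewise multiplication and
let `x ∈ ℝ^n` with stabilizer `H = {ε ∈ G : ε · x = x}`.  Then the orbit space `ℝ^n / H`,
with the quotient topology, is homeomorphic to `ℝ^n`. -/
theorem orbit_space_stabilizer_homeo_euclidean
    (n : ℕ) (hn : 1 ≤ n) (x : Fin n → ℝ) :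
    Nonempty ((Quot fun y z : Fin n → ℝ =>
        ∃ ε : Fin n → ℝ, (∀ i, ε i = 1 ∨ ε i = -1) ∧ (∏ i, ε i) = 1 ∧
          (∀ i, ε i * x i = x i) ∧ ∀ i, z i = ε i * y i) ≃ₜ (Fin n → ℝ)) := by
  classical
  show Nonempty ((Quot (OrbitAuxCplx1.R n x)) ≃ₜ (Fin n → ℝ))
  have hcont := OrbitAuxCplx1.Phi_cont n hn x
  have hsurj := OrbitAuxCplx1.Phi_surj n hn x
  have hproper : IsProperMap (OrbitAuxCplx1.Phi n hn x) := by
    rw [isProperMap_iff_isCompact_preimage]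
    refine ⟨hcont, fun K hK => ?_⟩
    obtain ⟨r, hr⟩ := hK.isBounded.subset_closedBall 0
    set C : ℝ := max r 0 with hC
    have hC0 : (0:ℝ) ≤ C := le_max_right _ _
    have hKC : ∀ w ∈ K, ∀ i, |w i| ≤ C := by
      intro w hw i
      have h1 : ‖w‖ ≤ r := by
        have := hr hw
        rwa [Metric.mem_closedBall, dist_zero_right] at this
      calc |w i| = ‖w i‖ := rfl
        _ ≤ ‖w‖ := norm_le_pi_norm w i
        _ ≤ C := le_trans h1 (le_max_left _ _)
    have hsub : OrbitAuxCplx1.Phi n hn x ⁻¹' K ⊆ Metric.closedBall 0 (3*C+1) := by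
      intro y hy
      rw [Metric.mem_closedBall, dist_zero_right,
        pi_norm_le_iff_of_nonneg (by linarith)]
      intro i
      exact OrbitAuxCplx1.Phi_bound n hn x hC0 (fun j => hKC _ hy j) i
    exact (isCompact_closedBall 0 (3*C+1)).of_isClosed_subset
      (hK.isClosed.preimage hcont) hsub
  have hquot : Topology.IsQuotientMap (OrbitAuxCplx1.Phi n hn x) :=
    hproper.isClosedMap.isQuotientMap hcont hsurj
  let L : Quot (OrbitAuxCplx1.R n x) → (Fin n → ℝ) :=
    Quot.lift (OrbitAuxCplx1.Phi n hn x)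
      (fun _ _ h => OrbitAuxCplx1.Phi_invariant n hn x h)
  have hLcont : Continuous L := continuous_quot_lift _ hcont
  have hLbij : Function.Bijective L := by
    constructor
    · intro a b hab
      obtain ⟨y, rfl⟩ := Quot.exists_rep a
      obtain ⟨z, rfl⟩ := Quot.exists_rep b
      exact Quot.sound (OrbitAuxCplx1.Phi_fibers n hn x hab)
    · intro w
      obtain ⟨y, hy⟩ := hsurj w
      exact ⟨Quot.mk _ y, hy⟩
  let e := Equiv.ofBijective L hLbij
  refine ⟨Homeomorph.mk e hLcont ?_⟩
  rw [hquot.continuous_iff]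
  have hcomp : (e.symm ∘ OrbitAuxCplx1.Phi n hn x) = Quot.mk _ := by
    funext y
    apply e.injective
    simp only [Function.comp_apply, Equiv.apply_symm_apply]
    rfl
  show Continuous (⇑e.symm ∘ OrbitAuxCplx1.Phi n hn x)
  rw [hcomp]
  exact continuous_quot_mk
end

section
/- Let n ≥ 1, let λ₁, …, λₙ be a basis of V = (ZMod 2)^n, let λ₁*, …, λₙ* be the dual basis of the dual space V*, let ξ ∈ V* be a nonzero linear functional, and let π : V* → V*/span{ξ} be the canonical quotient map. Then every subfamily of n−1 of the vectors π(λ₁*), …, π(λₙ*) is linearly independent in V*/span{ξ} if and only if ξ(λᵢ) = 1 for every i = 1, …, n. -/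
/-!
For a nonzero `x`, a family stays linearly independent modulo `K ∙ x` iff it is independent
and `x` lies outside its span. The dual basis vectors other than `λᵢ*` span exactly the
functionals with vanishing `i`-th coordinate, and the `i`-th coordinate of `ξ` in the dual basis
is `ξ(λᵢ)`; over `ZMod 2` being nonzero means being `1`.
-/

open Submodule Module

section

variable {K V ι : Type*} [DivisionRing K] [AddCommGroup V] [Module K V]

theorem linearIndependent_mkQ_span_singleton_iff {x : V} (hx : x ≠ 0) {v : ι → V} :
    LinearIndependent K ((K ∙ x).mkQ ∘ v) ↔
      LinearIndependent K v ∧ x ∉ span K (Set.range v) := by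
  rw [← disjoint_span_singleton' hx]
  refine ⟨fun h => ⟨h.of_comp, ?_⟩, fun h => h.1.map ?_⟩
  · simpa only [ker_mkQ] using range_ker_disjoint h
  · simpa only [ker_mkQ] using h.2

theorem Module.Basis.mem_span_ne_iff_repr_eq_zero (e : Basis ι K V) (i : ι) (x : V) :
    x ∈ span K (Set.range fun j : {j // j ≠ i} => e j) ↔ e.repr x i = 0 := by
  rw [Set.range_comp' e Subtype.val, Subtype.range_coe_subtype, e.mem_span_image]
  simp [Set.subset_def, not_imp_comm]

theorem Module.Basis.linearIndependent_mkQ_ne_iff_repr_ne_zero (e : Basis ι K V) {x : V}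
    (hx : x ≠ 0) (i : ι) :
    LinearIndependent K (fun j : {j // j ≠ i} => (K ∙ x).mkQ (e j)) ↔ e.repr x i ≠ 0 := by
  refine (linearIndependent_mkQ_span_singleton_iff hx (v := fun j : {j // j ≠ i} => e j)).trans ?_
  rw [e.mem_span_ne_iff_repr_eq_zero]
  exact and_iff_right (e.linearIndependent.comp _ Subtype.val_injective)

end

theorem general_position_iff_orientability_condition_general
    (n : ℕ)
    (lam : Module.Basis (Fin n) (ZMod 2) (Fin n → ZMod 2))
    (ξ : Module.Dual (ZMod 2) (Fin n → ZMod 2)) (hξ : ξ ≠ 0) :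
    (∀ i : Fin n,
        LinearIndependent (ZMod 2) fun j : {j : Fin n // j ≠ i} =>
          (Submodule.span (ZMod 2) {ξ}).mkQ (lam.dualBasis j)) ↔
      ∀ i : Fin n, ξ (lam i) = 1 := by
  have ne_zero_iff_eq_one : ∀ a : ZMod 2, a ≠ 0 ↔ a = 1 := by decide
  simp_rw [lam.dualBasis.linearIndependent_mkQ_ne_iff_repr_ne_zero hξ, lam.dualBasis_repr,
    ne_zero_iff_eq_one]

/-- Let `λ₁, …, λₙ` be a basis of `V = (ZMod 2)^n` with dual basis `λ₁*, …, λₙ*`, let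
`ξ ∈ V*` be nonzero, and let `π : V* → V*/span{ξ}` be the quotient map.  Then every
subfamily of `n-1` of the vectors `π(λ₁*), …, π(λₙ*)` is linearly independent if and only
if `ξ(λᵢ) = 1` for every `i`. -/
theorem general_position_iff_orientability_condition
    (n : ℕ) (hn : 1 ≤ n)
    (lam : Module.Basis (Fin n) (ZMod 2) (Fin n → ZMod 2))
    (ξ : Module.Dual (ZMod 2) (Fin n → ZMod 2)) (hξ : ξ ≠ 0) :
    (∀ i : Fin n,
        LinearIndependent (ZMod 2) fun j : {j : Fin n // j ≠ i} =>
          (Submodule.span (ZMod 2) {ξ}).mkQ (lam.dualBasis j)) ↔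
      ∀ i : Fin n, ξ (lam i) = 1 :=
  general_position_iff_orientability_condition_general n lam ξ hξ
end

section
/- Let n ≥ 1, let T^n = (S¹)^n be the n-fold product of the unit circle S¹ = {z ∈ ℂ : |z| = 1}, and let the group G = {ε ∈ {±1}^n : ∏ᵢ εᵢ = 1} act on T^n coordinatewise, where εᵢ = 1 acts as the identity on the i-th coordinate and εᵢ = −1 acts by complex conjugation zᵢ ↦ conj(zᵢ). Then the orbit space T^n / G, with the quotient topology, is homeomorphic to the unit sphere S^n ⊂ ℝ^(n+1). -/
/-!
The map `z ↦ (Re z₁, …, Re zₙ, ∏ Im zᵢ)` is invariant under the even conjugations, and its fibres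
are exactly the orbits: the real parts determine each `zᵢ` up to conjugation, and the product of
the imaginary parts forces an even number of conjugations, unless some `zᵢ` is real, in which case
that coordinate absorbs a superfluous conjugation. Its image is the double
`{(x, p) | xᵢ² ≤ 1, p² = ∏ (1 - xᵢ²)}` of the cube, which meets every ray from the origin exactly
once (along a ray `p²` grows while `∏ (1 - xᵢ²)` decreases). Radial projection onto `Sⁿ` is
therefore a continuous bijection from the compact orbit space onto a Hausdorff space.
-/

open Finset ComplexConjugate

noncomputable def Quot.homeomorphOfFibers {X Y : Type*} [TopologicalSpace X] [CompactSpace X]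
    [TopologicalSpace Y] [T2Space Y] {r : X → X → Prop} {f : X → Y} (hf : Continuous f)
    (hsurj : Function.Surjective f) (hr : ∀ x y, f x = f y ↔ r x y) : Quot r ≃ₜ Y :=
  let g : Quot r → Y := Quot.lift f fun x y hxy => (hr x y).mpr hxy
  have hg : Function.Bijective g := by
    refine ⟨fun a b hab => ?_, fun y => (hsurj y).elim fun x hx => ⟨Quot.mk r x, hx⟩⟩
    induction a using Quot.ind
    induction b using Quot.ind
    exact Quot.sound ((hr _ _).mp hab)
  (continuous_quot_lift _ hf).homeoOfEquivCompactToT2 (f := Equiv.ofBijective g hg)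

namespace Complex

theorem mem_sphere_zero_one_iff {z : ℂ} :
    z ∈ Metric.sphere (0 : ℂ) 1 ↔ z.re ^ 2 + z.im ^ 2 = 1 := by
  rw [mem_sphere_zero_iff_norm, norm_def, Real.sqrt_eq_one, normSq_apply, sq, sq]

theorem re_ite_conj (ε : ℤˣ) (z : ℂ) : (if ε = 1 then z else conj z).re = z.re := by
  split_ifs <;> simp

theorem im_ite_conj (ε : ℤˣ) (z : ℂ) :
    (if ε = 1 then z else conj z).im = (ε : ℤ) * z.im := by
  rcases Int.units_eq_one_or ε with rfl | rfl <;> simp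

theorem ite_conj_of_im_eq_zero (ε : ℤˣ) {z : ℂ} (hz : z.im = 0) :
    (if ε = 1 then z else conj z) = z := by
  split_ifs
  · rfl
  · exact conj_eq_iff_im.mpr hz

theorem exists_eq_ite_conj_of_norm_eq_of_re_eq {z w : ℂ} (hnorm : ‖z‖ = ‖w‖)
    (hre : z.re = w.re) :
    ∃ ε : ℤˣ, w = if ε = 1 then z else conj z := by
  have him : z.im ^ 2 = w.im ^ 2 := by
    have := congrArg (· ^ 2) hnorm
    simp only [← normSq_eq_norm_sq, normSq_apply, hre] at this
    nlinarith
  rcases sq_eq_sq_iff_eq_or_eq_neg.mp him with h | h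
  · exact ⟨1, by simp [Complex.ext_iff, hre, h]⟩
  · exact ⟨-1, by simp [Complex.ext_iff, hre, h]⟩

theorem exists_prod_eq_one_ite_conj {ι : Type*} [Fintype ι] [DecidableEq ι] {z w : ι → ℂ}
    (hnorm : ∀ i, ‖z i‖ = ‖w i‖) (hre : ∀ i, (z i).re = (w i).re)
    (him : ∏ i, (z i).im = ∏ i, (w i).im) :
    ∃ ε : ι → ℤˣ, ∏ i, ε i = 1 ∧ ∀ i, w i = if ε i = 1 then z i else conj (z i) := by
  choose ε hε using fun i => exists_eq_ite_conj_of_norm_eq_of_re_eq (hnorm i) (hre i)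
  by_cases hz : ∃ j, (z j).im = 0
  · obtain ⟨j, hj⟩ := hz
    refine ⟨ε * Pi.mulSingle j (∏ i, ε i), ?_, fun i => ?_⟩
    · rw [Pi.mul_def, prod_mul_distrib, prod_pi_mulSingle', if_pos (mem_univ j),
        Int.units_mul_self]
    · rcases eq_or_ne i j with rfl | hij
      · rw [hε i, ite_conj_of_im_eq_zero _ hj, ite_conj_of_im_eq_zero _ hj]
      · rw [hε i, Pi.mul_apply, Pi.mulSingle_eq_of_ne hij, mul_one]
  · simp only [not_exists] at hz
    have hprod : ∏ i, (w i).im = ((∏ i, ε i : ℤˣ) : ℤ) * ∏ i, (z i).im := by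
      simp only [hε, im_ite_conj, prod_mul_distrib, Units.coe_prod, Int.cast_prod]
    have hcast : (((∏ i, ε i : ℤˣ) : ℤ) : ℝ) = 1 :=
      mul_right_cancel₀ (prod_ne_zero_iff.mpr fun i _ => hz i) (by rw [← hprod, ← him, one_mul])
    exact ⟨ε, Units.val_eq_one.mp (Int.cast_eq_one.mp hcast), hε⟩

end Complex

section

variable {n : ℕ}

variable (n) in
noncomputable def torusInvariant (z : Fin n → Metric.sphere (0 : ℂ) 1) :
    EuclideanSpace ℝ (Fin (n + 1)) :=
  WithLp.toLp 2 (Fin.snoc (fun i => (z i : ℂ).re) (∏ i, (z i : ℂ).im))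

@[simp]
theorem torusInvariant_castSucc (z : Fin n → Metric.sphere (0 : ℂ) 1) (i : Fin n) :
    torusInvariant n z i.castSucc = (z i : ℂ).re := by
  simp [torusInvariant]

@[simp]
theorem torusInvariant_last (z : Fin n → Metric.sphere (0 : ℂ) 1) :
    torusInvariant n z (Fin.last n) = ∏ i, (z i : ℂ).im := by
  simp [torusInvariant]

theorem continuous_torusInvariant : Continuous (torusInvariant n) := by
  refine (PiLp.continuous_toLp 2 _).comp (continuous_pi fun j => ?_)
  induction j using Fin.lastCases with
  | last => simpa only [Fin.snoc_last] using by fun_prop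
  | cast i => simpa only [Fin.snoc_castSucc] using by fun_prop

theorem torusInvariant_eq_iff {z w : Fin n → Metric.sphere (0 : ℂ) 1} :
    torusInvariant n z = torusInvariant n w ↔
      (∀ i, (z i : ℂ).re = (w i : ℂ).re) ∧ ∏ i, (z i : ℂ).im = ∏ i, (w i : ℂ).im := by
  refine ⟨fun h => ⟨fun i => ?_, ?_⟩, fun ⟨hre, him⟩ => ?_⟩
  · simpa using congrArg (· i.castSucc) h
  · simpa using congrArg (· (Fin.last n)) h
  · ext j
    induction j using Fin.lastCases with
    | last => simpa using him
    | cast i => simpa using hre i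

theorem torusInvariant_eq_iff_exists_ite_conj {z w : Fin n → Metric.sphere (0 : ℂ) 1} :
    torusInvariant n z = torusInvariant n w ↔
      ∃ ε : Fin n → ℤˣ, ∏ i, ε i = 1 ∧
        ∀ i, (w i : ℂ) = if ε i = 1 then (z i : ℂ) else conj (z i : ℂ) := by
  rw [torusInvariant_eq_iff]
  constructor
  · rintro ⟨hre, him⟩
    refine Complex.exists_prod_eq_one_ite_conj (fun i => ?_) hre him
    rw [mem_sphere_zero_iff_norm.mp (z i).2, mem_sphere_zero_iff_norm.mp (w i).2]
  · rintro ⟨ε, hε, hw⟩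
    refine ⟨fun i => by rw [hw, Complex.re_ite_conj], ?_⟩
    simp only [hw, Complex.im_ite_conj, prod_mul_distrib]
    rw [← Int.cast_prod, ← Units.coe_prod, hε, Units.val_one, Int.cast_one, one_mul]

variable (n) in
/-- The double of the cube `[-1, 1]ⁿ` along its boundary: the two copies are the sheets `p ≥ 0`
and `p ≤ 0` of this surface, glued where some `xᵢ² = 1`. -/
def doubledCube : Set (EuclideanSpace ℝ (Fin (n + 1))) :=
  {v | (∀ i : Fin n, v i.castSucc ^ 2 ≤ 1) ∧
    v (Fin.last n) ^ 2 = ∏ i : Fin n, (1 - v i.castSucc ^ 2)}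

theorem torusInvariant_mem_doubledCube (z : Fin n → Metric.sphere (0 : ℂ) 1) :
    torusInvariant n z ∈ doubledCube n := by
  have hz i := Complex.mem_sphere_zero_one_iff.mp (z i).2
  refine ⟨fun i => ?_, ?_⟩
  · simpa using (hz i).le.trans' (le_add_of_nonneg_right (sq_nonneg _))
  · simp only [torusInvariant_castSucc, torusInvariant_last, ← prod_pow]
    exact prod_congr rfl fun i _ => by linarith [hz i]

theorem range_torusInvariant (hn : 0 < n) : Set.range (torusInvariant n) = doubledCube n := by
  refine (Set.range_subset_iff.mpr torusInvariant_mem_doubledCube).antisymm fun v ⟨hx, hp⟩ => ?_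
  set x : Fin n → ℝ := fun i => v i.castSucc
  set p := v (Fin.last n)
  -- a sign on one coordinate makes `∏ yᵢ` equal to `p` rather than `|p|`
  set c : ℝ := if 0 ≤ p then 1 else -1
  set s : Fin n → ℝ := Pi.mulSingle ⟨0, hn⟩ c
  have hs i : s i ^ 2 = 1 := by
    simp only [s, c, Pi.mulSingle_apply]
    split_ifs <;> norm_num
  have hx' i : 0 ≤ 1 - x i ^ 2 := sub_nonneg.mpr (hx i)
  let y i := s i * √(1 - x i ^ 2)
  have hy i : (⟨x i, y i⟩ : ℂ) ∈ Metric.sphere (0 : ℂ) 1 := by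
    rw [Complex.mem_sphere_zero_one_iff, mul_pow, hs, one_mul, Real.sq_sqrt (hx' i)]
    ring
  have hprod : ∏ i, y i = p := by
    rw [prod_mul_distrib, prod_pi_mulSingle', if_pos (mem_univ _), ← Real.sqrt_prod _
      fun i _ => hx' i, ← hp, Real.sqrt_sq_eq_abs]
    simp only [c]
    split_ifs with h
    · rw [abs_of_nonneg h, one_mul]
    · rw [abs_of_neg (not_le.mp h), neg_one_mul, neg_neg]
  refine ⟨fun i => ⟨_, hy i⟩, ?_⟩
  ext j
  induction j using Fin.lastCases with
  | last => simpa using hprod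
  | cast i => simp [x]

theorem zero_notMem_doubledCube : (0 : EuclideanSpace ℝ (Fin (n + 1))) ∉ doubledCube n := by
  rintro ⟨-, h⟩
  simp at h

theorem eq_one_of_smul_mem_doubledCube {u : EuclideanSpace ℝ (Fin (n + 1))} {l : ℝ}
    (hu : u ∈ doubledCube n) (hlu : l • u ∈ doubledCube n) (hl : 1 ≤ l) : l = 1 := by
  obtain ⟨hx, hp⟩ := hu
  obtain ⟨hlx, hlp⟩ := hlu
  simp only [PiLp.smul_apply, smul_eq_mul] at hlx hlp
  suffices l ^ 2 ≤ 1 by nlinarith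
  by_cases h0 : u (Fin.last n) = 0
  · have hprod : ∏ i : Fin n, (1 - u i.castSucc ^ 2) = 0 := by
      rw [← hp, h0, zero_pow two_ne_zero]
    obtain ⟨k, -, hk⟩ := prod_eq_zero_iff.mp hprod
    nlinarith [hlx k]
  · have hle :
        ∏ i : Fin n, (1 - (l * u i.castSucc) ^ 2) ≤ ∏ i : Fin n, (1 - u i.castSucc ^ 2) := by
      refine prod_le_prod (fun i _ => sub_nonneg.mpr (hlx i)) fun i _ => ?_
      have := mul_nonneg (sub_nonneg.mpr (one_le_pow₀ (n := 2) hl)) (sq_nonneg (u i.castSucc))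
      linarith [mul_pow l (u i.castSucc) 2]
    rw [← hlp, ← hp, mul_pow] at hle
    exact le_of_mul_le_mul_right (by rwa [one_mul]) (by positivity)

theorem eq_of_sameRay_of_mem_doubledCube {u v : EuclideanSpace ℝ (Fin (n + 1))}
    (hu : u ∈ doubledCube n) (hv : v ∈ doubledCube n) (h : SameRay ℝ u v) : u = v := by
  obtain ⟨r, hr, rfl⟩ := h.exists_pos_left (ne_of_mem_of_not_mem hu zero_notMem_doubledCube)
    (ne_of_mem_of_not_mem hv zero_notMem_doubledCube)
  rcases le_total 1 r with h1 | h1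
  · rw [eq_one_of_smul_mem_doubledCube hu hv h1, one_smul]
  · have hu' : r⁻¹ • r • u ∈ doubledCube n := by rwa [inv_smul_smul₀ hr.ne']
    rw [inv_eq_one.mp (eq_one_of_smul_mem_doubledCube hv hu' ((one_le_inv₀ hr).mpr h1)),
      one_smul]

theorem exists_pos_smul_mem_doubledCube {u : EuclideanSpace ℝ (Fin (n + 1))}
    (hu : u ≠ 0) : ∃ t : ℝ, 0 < t ∧ t • u ∈ doubledCube n := by
  -- rescaling by `T` makes the largest coordinate `±1`, so `g T ≤ 0 < g 0` below
  obtain ⟨j, -, hj⟩ := exists_max_image univ (fun k => |u k|) univ_nonempty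
  have hj0 : 0 < |u j| := by
    by_contra! h
    exact hu (by ext k; exact abs_nonpos_iff.mp ((hj k (mem_univ _)).trans h))
  set T := |u j|⁻¹
  have hT k : (T * u k) ^ 2 ≤ 1 := by
    rw [sq_le_one_iff_abs_le_one, abs_mul, abs_inv, abs_abs, inv_mul_le_one₀ hj0]
    exact hj k (mem_univ _)
  have hTj : (T * u j) ^ 2 = 1 := by
    rw [← sq_abs, abs_mul, abs_inv, abs_abs, inv_mul_cancel₀ hj0.ne', one_pow]
  let g : ℝ → ℝ := fun t =>
    ∏ i : Fin n, (1 - (t * u i.castSucc) ^ 2) - (t * u (Fin.last n)) ^ 2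
  have hg : Continuous g := by fun_prop
  have hg0 : g 0 = 1 := by simp [g]
  have hgT : g T ≤ 0 := by
    rw [sub_nonpos]
    induction j using Fin.lastCases with
    | last =>
      rw [hTj]
      exact prod_le_one (fun i _ => sub_nonneg.mpr (hT _)) fun i _ => sub_le_self _ (sq_nonneg _)
    | cast m =>
      rw [prod_eq_zero (mem_univ m) (sub_eq_zero.mpr hTj.symm)]
      exact sq_nonneg _
  obtain ⟨t, ⟨ht0, htT⟩, hgt⟩ :=
    intermediate_value_Icc' (inv_nonneg.mpr hj0.le) hg.continuousOn
      ⟨hgT, hg0.ge.trans' zero_le_one⟩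
  have htpos : 0 < t := ht0.lt_of_ne (by rintro rfl; simp [hg0] at hgt)
  refine ⟨t, htpos, fun i => ?_, ?_⟩
  · simp only [PiLp.smul_apply, smul_eq_mul, mul_pow] at hT ⊢
    exact (mul_le_mul_of_nonneg_right (pow_le_pow_left₀ ht0 htT 2) (sq_nonneg _)).trans (hT _)
  · simp only [PiLp.smul_apply, smul_eq_mul]
    exact (sub_eq_zero.mp hgt).symm

theorem torusInvariant_ne_zero (z : Fin n → Metric.sphere (0 : ℂ) 1) :
    torusInvariant n z ≠ 0 :=
  ne_of_mem_of_not_mem (torusInvariant_mem_doubledCube z) zero_notMem_doubledCube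

variable (n) in
noncomputable def torusToSphere (z : Fin n → Metric.sphere (0 : ℂ) 1) :
    Metric.sphere (0 : EuclideanSpace ℝ (Fin (n + 1))) 1 :=
  ⟨‖torusInvariant n z‖⁻¹ • torusInvariant n z, by
    rw [mem_sphere_zero_iff_norm, norm_smul, norm_inv, norm_norm,
      inv_mul_cancel₀ (norm_ne_zero_iff.mpr (torusInvariant_ne_zero z))]⟩

theorem coe_torusToSphere (z : Fin n → Metric.sphere (0 : ℂ) 1) :
    (torusToSphere n z : EuclideanSpace ℝ (Fin (n + 1))) =
      ‖torusInvariant n z‖⁻¹ • torusInvariant n z :=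
  rfl

theorem continuous_torusToSphere : Continuous (torusToSphere n) :=
  ((continuous_torusInvariant.norm.inv₀ fun z =>
    norm_ne_zero_iff.mpr (torusInvariant_ne_zero z)).smul continuous_torusInvariant).subtype_mk _

theorem torusToSphere_eq_iff {z w : Fin n → Metric.sphere (0 : ℂ) 1} :
    torusToSphere n z = torusToSphere n w ↔ torusInvariant n z = torusInvariant n w := by
  rw [Subtype.ext_iff, coe_torusToSphere, coe_torusToSphere,
    ← sameRay_iff_inv_norm_smul_eq_of_ne (torusInvariant_ne_zero z) (torusInvariant_ne_zero w)]
  exact ⟨eq_of_sameRay_of_mem_doubledCube (torusInvariant_mem_doubledCube z)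
    (torusInvariant_mem_doubledCube w), fun h => h ▸ SameRay.rfl⟩

theorem surjective_torusToSphere (hn : 0 < n) : Function.Surjective (torusToSphere n) := by
  intro u
  have hu : ‖(u : EuclideanSpace ℝ (Fin (n + 1)))‖ = 1 := mem_sphere_zero_iff_norm.mp u.2
  obtain ⟨t, ht, htu⟩ := exists_pos_smul_mem_doubledCube (ne_zero_of_mem_unit_sphere u)
  obtain ⟨z, hz⟩ := (range_torusInvariant hn).symm ▸ htu
  refine ⟨z, Subtype.ext ?_⟩
  rw [coe_torusToSphere, hz, norm_smul, hu, mul_one, Real.norm_of_nonneg ht.le,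
    inv_smul_smul₀ ht.ne']

end

/-- Let the group `G = {ε ∈ {±1}^n : ∏ εᵢ = 1}` act on the torus `T^n = (S¹)^n`
coordinatewise, with `εᵢ = 1` acting as the identity and `εᵢ = -1` acting by complex
conjugation on the `i`-th coordinate.  Then the orbit space `T^n / G`, with the quotient
topology, is homeomorphic to the unit sphere `S^n ⊂ ℝ^(n+1)`. -/
theorem torus_quotient_by_even_conjugations_homeo_sphere
    (n : ℕ) (hn : 1 ≤ n) :
    Nonempty ((Quot fun z w : Fin n → Metric.sphere (0 : ℂ) 1 =>
        ∃ ε : Fin n → ℤˣ, (∏ i, ε i) = 1 ∧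
          ∀ i, (w i : ℂ) = if ε i = 1 then (z i : ℂ) else starRingEnd ℂ (z i)) ≃ₜ
      Metric.sphere (0 : EuclideanSpace ℝ (Fin (n + 1))) 1) :=
  ⟨Quot.homeomorphOfFibers continuous_torusToSphere (surjective_torusToSphere hn) fun _ _ =>
    torusToSphere_eq_iff.trans torusInvariant_eq_iff_exists_ite_conj⟩
end

section
/- There is no injective group homomorphism from (ZMod 2)³ into the special orthogonal group SO(3, ℝ) of real 3×3 orthogonal matrices of determinant 1; equivalently, SO(3, ℝ) contains no subgroup isomorphic to (ZMod 2)³. -/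
/-!
An involution `A ∈ SO(3)` satisfies `adj A = A⁻¹ = A`, and `2 tr (adj A) = (tr A)² - tr (A²)`
for `3 × 3` matrices, so `tr A ∈ {3, -1}`; trace `3` only occurs for `A = 1`. An injective
image of `(ZMod 2)³` would therefore have trace sum `3 + 7 * (-1) = -4`, whereas the trace sum
of a representation of a finite group is `|G|` times the dimension of its invariants.
-/

open Matrix ComplexOrder

namespace Matrix

theorem two_mul_trace_adjugate_fin_three {R : Type*} [CommRing R]
    (A : Matrix (Fin 3) (Fin 3) R) :
    2 * (adjugate A).trace = A.trace ^ 2 - (A * A).trace := by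
  simp [adjugate_fin_three, trace_fin_three, mul_apply, Fin.sum_univ_three]
  ring

theorem trace_eq_three_or_eq_neg_one_of_mul_self_eq_one {R : Type*} [CommRing R] [IsDomain R]
    {A : Matrix (Fin 3) (Fin 3) R} (hA : A * A = 1) (hdet : A.det = 1) :
    A.trace = 3 ∨ A.trace = -1 := by
  have hadj : adjugate A = A := by
    calc adjugate A = A * A * adjugate A := by rw [hA, one_mul]
      _ = A := by rw [mul_assoc, mul_adjugate, hdet, one_smul, mul_one]
  have h := two_mul_trace_adjugate_fin_three A
  rw [hadj, hA, trace_one, Fintype.card_fin] at h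
  have hroots : (A.trace - 3) * (A.trace + 1) = 0 := by linear_combination -h
  rcases mul_eq_zero.1 hroots with h3 | h1
  exacts [.inl (sub_eq_zero.1 h3), .inr (eq_neg_of_add_eq_zero_left h1)]

theorem eq_one_of_mem_unitaryGroup_of_trace_eq_card {n 𝕜 : Type*} [Fintype n] [DecidableEq n]
    [RCLike 𝕜] {A : Matrix n n 𝕜} (hA : A ∈ unitaryGroup n 𝕜)
    (htr : A.trace = Fintype.card n) : A = 1 := by
  -- `tr ((A - 1)ᴴ (A - 1)) = 2 n - tr A - conj (tr A)`
  have hdist : ((A - 1)ᴴ * (A - 1)).trace = 0 := by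
    rw [conjTranspose_sub, conjTranspose_one, sub_mul, mul_sub, mul_sub, ← star_eq_conjTranspose,
      hA.1, one_mul, mul_one, one_mul]
    simp [trace_sub, star_eq_conjTranspose, trace_conjTranspose, htr]
  exact sub_eq_zero.1 (trace_conjTranspose_mul_self_eq_zero_iff.1 hdist)

theorem sum_trace_nonneg_of_monoidHom {G k n : Type*} [Group G] [Fintype G] [Field k]
    [LinearOrder k] [IsStrictOrderedRing k] [Fintype n] [DecidableEq n]
    (ρ : G →* Matrix n n k) : 0 ≤ ∑ g, (ρ g).trace := by
  let ρ' : Representation k G (n → k) :=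
    (toLinAlgEquiv' : Matrix n n k ≃ₐ[k] _).toAlgHom.toMonoidHom.comp ρ
  have hG : (Nat.card G : k) ≠ 0 := Nat.cast_ne_zero.2 Nat.card_pos.ne'
  have := invertibleOfNonzero hG
  have hchar : ∑ g, (ρ g).trace = ∑ g, ρ'.character g :=
    Finset.sum_congr rfl fun g _ => (trace_toLin'_eq (ρ g)).symm
  rw [hchar, ← mul_inv_cancel_left₀ hG (∑ g, ρ'.character g),
    ρ'.card_inv_mul_sum_char_eq_finrank]
  positivity

end Matrix

/-- There is no injective group homomorphism from `(ZMod 2)³` into `SO(3, ℝ)`;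
equivalently, `SO(3, ℝ)` contains no subgroup isomorphic to `(ZMod 2)³`. -/
theorem no_injective_hom_zmod2_pow_three_to_SO3 :
    ¬ ∃ f : Multiplicative (Fin 3 → ZMod 2) →*
        Matrix.specialOrthogonalGroup (Fin 3) ℝ,
      Function.Injective f := by
  rintro ⟨f, hf⟩
  let ρ := (specialOrthogonalGroup (Fin 3) ℝ).subtype.comp f
  have htrace : ∀ x ≠ 1, (ρ x).trace = -1 := by
    intro x hx
    have hsq : ρ x * ρ x = 1 := by
      rw [← map_mul, ← map_one ρ]
      exact congrArg ρ (funext fun i => CharTwo.add_self_eq_zero (x.toAdd i))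
    refine (trace_eq_three_or_eq_neg_one_of_mul_self_eq_one hsq (f x).2.2).resolve_left
      fun h3 => hx (hf (Subtype.ext ?_))
    rw [map_one]
    exact eq_one_of_mem_unitaryGroup_of_trace_eq_card (f x).2.1 h3
  have hsum : ∑ x, (ρ x).trace = -4 := by
    rw [← Finset.add_sum_erase _ _ (Finset.mem_univ 1),
      Finset.sum_congr rfl fun x hx => htrace x (Finset.ne_of_mem_erase hx)]
    norm_num
  linarith [sum_trace_nonneg_of_monoidHom ρ]
end
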